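/- For every closed λ-term t, the length (number of entries) of its crumbling is at most the size of t: |⌊t⌋|_len ≤ |t|. -/

import Mathlib

/-- λ-terms -/
inductive Tm where
  | var : ℕ → Tm
  | lam : ℕ → Tm → Tm
  | app : Tm → Tm → Tm
deriving DecidableEq

def Tm.fv : Tm → Finset ℕ
  | .var x => {x}
  | .lam x t => t.fv.erase x
  | .app t u => t.fv ∪ u.fv

def Tm.isValue : Tm → Prop
  | .var _ => True
  | .lam _ _ => True
  | .app _ _ => False

def Tm.subst : Tm → ℕ → Tm → Tm
  | .var x, z, s => if x = z then s else .var x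
  | .lam x t, z, s => if x = z then .lam x t else .lam x (t.subst z s)
  | .app t u, z, s => .app (t.subst z s) (u.subst z s)

def Tm.size : Tm → ℕ
  | .var _ => 1
  | .lam _ t => t.size + 1
  | .app t u => t.size + u.size + 1

/-- Right v-contexts: R ::= ⟨·⟩ | t R | R v -/
inductive RCtx where
  | hole : RCtx
  | appL : Tm → RCtx → RCtx
  | appR : RCtx → Tm → RCtx

def RCtx.wf : RCtx → Prop
  | .hole => True
  | .appL _ R => R.wf
  | .appR R v => R.wf ∧ v.isValue

def RCtx.plug : RCtx → Tm → Tm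
  | .hole, t => t
  | .appL u R, t => .app u (R.plug t)
  | .appR R v, t => .app (R.plug t) v

def RCtx.comp : RCtx → RCtx → RCtx
  | .hole, R' => R'
  | .appL u R, R' => .appL u (R.comp R')
  | .appR R v, R' => .appR (R.comp R') v

/-- weak call-by-value reduction -/
def BetaV (t u : Tm) : Prop :=
  ∃ R : RCtx, R.wf ∧ ∃ x body v, Tm.isValue v ∧
    t = R.plug (.app (.lam x body) v) ∧ u = R.plug (body.subst x v)

/-- general one-hole contexts -/
inductive PCtx where
  | hole : PCtx
  | lam : ℕ → PCtx → PCtx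
  | appL : PCtx → Tm → PCtx
  | appR : Tm → PCtx → PCtx

def PCtx.plug : PCtx → Tm → Tm
  | .hole, t => t
  | .lam x C, t => .lam x (C.plug t)
  | .appL C u, t => .app (C.plug t) u
  | .appR u C, t => .app u (C.plug t)

/-- a one-hole context is a right v-context -/
def PCtx.isRight : PCtx → Prop
  | .hole => True
  | .lam _ _ => False
  | .appL C u => C.isRight ∧ u.isValue
  | .appR _ C => C.isRight

/-- `HS t z C` : C is the result of replacing the (unique) occurrence of z in t by a hole -/
inductive HS : Tm → ℕ → PCtx → Prop
  | var {z} : HS (.var z) z .hole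
  | lam {x z t C} : x ≠ z → HS t z C → HS (.lam x t) z (.lam x C)
  | appL {z t u C} : HS t z C → z ∉ u.fv → HS (.app t u) z (.appL C u)
  | appR {z t u C} : z ∉ t.fv → HS u z C → HS (.app t u) z (.appR t C)

-- Crumbled syntax: bites and environments.  The binder `none` stands for `*`. 
mutual
inductive Bite where
  | app : ℕ → ℕ → Bite
  | lamVar : ℕ → ℕ → Bite      -- λx.[*←y]
  | lam : ℕ → Env → Bite       -- λx.E
inductive Env where
  | nil : Env
  | cons : Env → Option ℕ → Bite → Env   -- E[x←b]
end

def Env.append : Env → Env → Env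
  | E, .nil => E
  | E, .cons E' x b => .cons (E.append E') x b

mutual
def Bite.fv : Bite → Finset ℕ
  | .app x y => {x, y}
  | .lamVar x y => ({y} : Finset ℕ) \ {x}
  | .lam x E => E.fv.erase x
def Env.fv : Env → Finset ℕ
  | .nil => ∅
  | .cons E (some z) b => (E.fv.erase z) ∪ b.fv
  | .cons E none b => E.fv ∪ b.fv
end

mutual
def Bite.bv : Bite → Finset ℕ
  | .app _ _ => ∅
  | .lamVar x _ => {x}
  | .lam x E => insert x E.bv
def Env.bv : Env → Finset ℕ
  | .nil => ∅
  | .cons E _ b => E.bv ∪ b.bv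
end

def Env.domList : Env → List (Option ℕ)
  | .nil => []
  | .cons E z _ => z :: E.domList

def Bite.isVal : Bite → Prop
  | .app _ _ => False
  | _ => True

/-- every entry maps a variable to a crumbled value -/
def Env.IsVEnv : Env → Prop
  | .nil => True
  | .cons E _ b => E.IsVEnv ∧ b.isVal

/-- a crumble: nonempty environment whose leftmost entry binds `*` -/
def Env.IsCrumble : Env → Prop
  | .nil => False
  | .cons .nil z _ => z = none
  | .cons E _ _ => E.IsCrumble

def Env.lookup : Env → ℕ → Option Bite
  | .nil, _ => none
  | .cons E (some y) b, x => if y = x then some b else E.lookup x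
  | .cons E none _, x => E.lookup x

-- substitution of a variable for a variable, leaving domains untouched 
mutual
def Bite.rename : Bite → ℕ → ℕ → Bite
  | .app a b, z, y => .app (if a = z then y else a) (if b = z then y else b)
  | .lamVar x w, z, y =>
      if x = z then .lamVar x w else .lamVar x (if w = z then y else w)
  | .lam x E, z, y => if x = z then .lam x E else .lam x (E.rename z y)
def Env.rename : Env → ℕ → ℕ → Env
  | .nil, _, _ => .nil
  | .cons E x b, z, y => .cons (E.rename z y) x (b.rename z y)
end

/-- replace the binder of the leftmost entry -/
def Env.setHead : Env → Option ℕ → Env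
  | .nil, _ => .nil
  | .cons .nil _ b, z => .cons .nil z b
  | .cons E x b, z => .cons (E.setHead z) x b

def Env.len : Env → ℕ
  | .nil => 0
  | .cons E _ _ => E.len + 1

mutual
def Bite.size : Bite → ℕ
  | .app _ _ => 2
  | .lamVar _ _ => 2
  | .lam _ E => E.size + 1
def Env.size : Env → ℕ
  | .nil => 0
  | .cons E _ b => E.size + b.size
end

/-- reduction of the finest crumbled calculus -/
inductive Step : Env → Env → Prop
  | m1 {E Ev : Env} {z : Option ℕ} {x y x₁ : ℕ} {Eb : Env} :
      Ev.IsVEnv → Ev.lookup x = some (.lam x₁ Eb) → Eb.IsCrumble →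
      Step ((E.cons z (.app x y)).append Ev)
           ((E.append ((Eb.rename x₁ y).setHead z)).append Ev)
  | m2 {E Ev : Env} {z : Option ℕ} {x y x₁ y₁ : ℕ} {v : Bite} :
      Ev.IsVEnv → Ev.lookup x = some (.lamVar x₁ y₁) →
      Ev.lookup (if y₁ = x₁ then y else y₁) = some v →
      Step ((E.cons z (.app x y)).append Ev) ((E.cons z v).append Ev)

def maxVar : Tm → ℕ
  | .var x => x
  | .lam x t => max x (maxVar t)
  | .app t u => max (maxVar t) (maxVar u)

/-- the finest crumbling translation, with a counter supplying fresh variables -/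
def crumbA : Tm → ℕ → Env × ℕ
  | .var x, n => (.cons .nil none (.app x x), n)
  | .lam x (.var y), n => (.cons .nil none (.lamVar x y), n)
  | .lam x t, n =>
      let p := crumbA t n
      (.cons .nil none (.lam x p.1), p.2)
  | .app (.var x) (.var y), n => (.cons .nil none (.app x y), n)
  | .app u (.var y), n =>
      let p := crumbA u n
      ((Env.cons .nil none (.app p.2 y)).append (p.1.setHead (some p.2)), p.2 + 1)
  | .app (.var x) u', n =>
      let p := crumbA u' n
      ((Env.cons .nil none (.app x p.2)).append (p.1.setHead (some p.2)), p.2 + 1)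
  | .app u u', n =>
      let p := crumbA u n
      let q := crumbA u' p.2
      (((Env.cons .nil none (.app q.2 (q.2 + 1))).append
          (p.1.setHead (some q.2))).append (q.1.setHead (some (q.2 + 1))),
       q.2 + 2)

def crumb (t : Tm) : Env := (crumbA t (maxVar t + 1)).1

-- read-back of bites and environments 
mutual
def Bite.rb : Bite → Tm
  | .app x y => .app (.var x) (.var y)
  | .lamVar x y => .lam x (.var y)
  | .lam x E => .lam x (Env.rb E)
def Env.rb : Env → Tm
  | .nil => .var 0
  | .cons .nil _ b => Bite.rb b
  | .cons E (some z) b => (Env.rb E).subst z (Bite.rb b)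
  | .cons (.cons E w b') none b => Env.rb (.cons E w b')
end

/-- the parallel substitution σ_{E_v} applied to a term -/
def Env.applySigma : Env → Tm → Tm
  | .nil, t => t
  | .cons E (some x) b, t => (E.applySigma t).subst x (Bite.rb b)
  | .cons E none _, t => E.applySigma t

/-- σ applied to the non-hole parts of a right v-context -/
def Env.applySigmaR : Env → RCtx → RCtx
  | _, .hole => .hole
  | Ev, .appL u R => .appL (Ev.applySigma u) (Ev.applySigmaR R)
  | Ev, .appR R v => .appR (Ev.applySigmaR R) (Ev.applySigma v)

def Env.WellNamed (E : Env) : Prop :=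
  E.domList.Nodup ∧
  (∀ x : ℕ, some x ∈ E.domList → x ∉ E.bv) ∧
  (∀ (E₁ : Env) (z : Option ℕ) (b : Bite) (E₂ : Env),
     E = (E₁.cons z b).append E₂ →
     ∀ v : ℕ, z = some v → v ∉ b.fv ∧ v ∉ E₂.fv)

/-- lookup returning the read-back of the bound value, defaulting to the variable -/
def Env.lookTm (E : Env) (x : ℕ) : Tm :=
  match E.lookup x with
  | some b => b.rb
  | none => .var x

/-- RCAM: history entries and states -/
inductive HEntry where
  | unit : HEntry
  | pair : ℕ → ℕ → HEntry

abbrev MState := Env × Env × List HEntry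

inductive FStep : MState → MState → Prop
  | sea {E₁ Ev : Env} {H : List HEntry} {x : Option ℕ} {v : Bite} :
      v.isVal →
      FStep (E₁.cons x v, Ev, H) (E₁, (Env.cons .nil x v).append Ev, .unit :: H)
  | m1 {E₁ Ev : Env} {H : List HEntry} {z : Option ℕ} {x y x₁ : ℕ} {Eb : Env} :
      Ev.IsVEnv → Ev.lookup x = some (.lam x₁ Eb) → Eb.IsCrumble →
      FStep (E₁.cons z (.app x y), Ev, H)
            (E₁.append ((Eb.rename x₁ y).setHead z), Ev, .pair x y :: H)
  | m2 {E₁ Ev : Env} {H : List HEntry} {z : Option ℕ} {x y x₁ y₁ : ℕ} {v : Bite} :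
      Ev.IsVEnv → Ev.lookup x = some (.lamVar x₁ y₁) →
      Ev.lookup (if y₁ = x₁ then y else y₁) = some v →
      FStep (E₁.cons z (.app x y), Ev, H)
            (E₁, (Env.cons .nil z v).append Ev, .pair x y :: H)

inductive BStep : MState → MState → Prop
  | sea {E₁ Ev : Env} {H : List HEntry} {x : Option ℕ} {v : Bite} :
      v.isVal →
      BStep (E₁, (Env.cons .nil x v).append Ev, .unit :: H) (E₁.cons x v, Ev, H)
  | m1 {E₁ Ev D : Env} {H : List HEntry} {z : Option ℕ} {x y x₁ : ℕ}
       {Eb : Env} {b' : Bite} :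
      Ev.IsVEnv → Ev.lookup x = some (.lam x₁ Eb) → Eb.IsCrumble →
      D.len = Eb.len - 1 →
      BStep ((E₁.cons z b').append D, Ev, .pair x y :: H)
            (E₁.cons z (.app x y), Ev, H)
  | m2 {E₁ Ev : Env} {H : List HEntry} {z : Option ℕ} {x y x₁ y₁ : ℕ} {w : Bite} :
      Ev.IsVEnv → Ev.lookup x = some (.lamVar x₁ y₁) →
      BStep (E₁, (Env.cons .nil z w).append Ev, .pair x y :: H)
            (E₁.cons z (.app x y), Ev, H)


lemma Env.len_append : ∀ (E E' : Env), (E.append E').len = E.len + E'.len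
  | E, .nil => by simp [Env.append, Env.len]
  | E, .cons E' x b => by
      simp [Env.append, Env.len, Env.len_append E E']; omega

lemma Env.len_setHead : ∀ (E : Env) (z : Option ℕ), (E.setHead z).len = E.len
  | .nil, _ => rfl
  | .cons .nil x b, z => rfl
  | .cons (.cons E y b') x b, z => by
      simp [Env.setHead, Env.len, Env.len_setHead (Env.cons E y b') z]

lemma crumbA_len (t : Tm) (n : ℕ) : (crumbA t n).1.len ≤ t.size := by
  induction t, n using crumbA.induct with
  | case1 x n => simp [crumbA, Env.len, Tm.size]
  | case2 x y n => simp [crumbA, Env.len, Tm.size]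
  | case3 x t n h ih => simp_all [crumbA, Env.len, Tm.size]
  | case4 x y n => simp [crumbA, Env.len, Tm.size]
  | case5 u y n h ih =>
    simp_all [crumbA, Env.len, Tm.size, Env.len_append, Env.len_setHead]; omega
  | case6 x u n h ih =>
    simp_all [crumbA, Env.len, Tm.size, Env.len_append, Env.len_setHead]; omega
  | case7 u u' n h1 h2 h3 p ih1 ih2 =>
    have h2' : (crumbA u' (crumbA u n).2).1.len ≤ u'.size := ih2
    simp only [crumbA, Tm.size, Env.len, Env.len_append, Env.len_setHead]
    omega

/-- for closed t, the length of the crumbling is at most |t|. -/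
theorem crumb_len (t : Tm) (hclosed : t.fv = ∅) :
    (crumb t).len ≤ t.size :=
  crumbA_len t _
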